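/- Let X be a set and K : X × X → ℂ a bounded function satisfying condition (A1). Then the following are equivalent: (i) K satisfies condition (A4); (ii) for every n, all pairwise distinct x₁, …, xₙ ∈ X, every y ∈ ℂⁿ, and every c ∈ ℓ¹(X) with Φ(c)(x_i) = y_i for all i ∈ {1, …, n}, one has ‖c‖_{ℓ¹(X)} ≥ ‖(K[x])^{-1} y‖₁. -/

import Mathlib

open Matrix

/-- The kernel matrix `K[x]`, with `(j,k)` entry `K(x_k, x_j)`. -/
noncomputable def kernelMatrix {X : Type*} (K : X → X → ℂ) {n : ℕ} (x : Fin n → X) :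
    Matrix (Fin n) (Fin n) ℂ := Matrix.of fun j k => K (x k) (x j)

/-- The vector `K_x(t)`, with `j`-th entry `K(t, x_j)`. -/
noncomputable def kernelVec {X : Type*} (K : X → X → ℂ) {n : ℕ} (x : Fin n → X) (t : X) :
    Fin n → ℂ := fun j => K t (x j)

/-- The `ℓ¹` norm of a vector in `ℂⁿ`. -/
noncomputable def l1norm {n : ℕ} (v : Fin n → ℂ) : ℝ := ∑ j, ‖v j‖

/-- Condition (A1): every kernel matrix at finitely many pairwise distinct points is
nonsingular. -/
def CondA1 {X : Type*} (K : X → X → ℂ) : Prop :=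
  ∀ (n : ℕ) (x : Fin n → X), Function.Injective x → IsUnit (kernelMatrix K x).det

/-- Condition (A4): for all pairwise distinct `x₁, …, x_{n+1}`,
`‖K[x]⁻¹ K_x(x_{n+1})‖₁ ≤ 1`, where `K[x]`, `K_x` are taken at `x₁, …, xₙ`. -/
def CondA4 {X : Type*} (K : X → X → ℂ) : Prop :=
  ∀ (n : ℕ) (x : Fin (n + 1) → X), Function.Injective x →
    l1norm ((kernelMatrix K (fun i : Fin n => x i.castSucc))⁻¹ *ᵥ
      kernelVec K (fun i : Fin n => x i.castSucc) (x (Fin.last n))) ≤ 1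

/-- `Φ(c)(x) = ∑_{t ∈ X} c_t K(t, x)` for `c ∈ ℓ¹(X)`. -/
noncomputable def PhiMap {X : Type*} (K : X → X → ℂ) (c : X → ℂ) (x : X) : ℂ :=
  ∑' t, c t * K t x

/-! Put `g t := K[x]⁻¹ K_x(t)`. Condition (A4) says `‖g t‖₁ ≤ 1` for `t` outside `{x₁, …, xₙ}`,
and `g xᵢ` is the `i`-th unit vector. If `Φ(c) = y` on the `xᵢ`, then `y = ∑' t, c_t K_x(t)`, so
`K[x]⁻¹ y = ∑' t, c_t g t`, a series converging absolutely in `ℓ¹` with norm at most `‖c‖₁`.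
Conversely, (A4) is the case `c = δ_{x_{n+1}}`, `y = K_x(x_{n+1})`. -/

lemma l1norm_nonneg {n : ℕ} (v : Fin n → ℂ) : 0 ≤ l1norm v :=
  Finset.sum_nonneg fun _ _ => norm_nonneg _

lemma norm_apply_le_l1norm {n : ℕ} (v : Fin n → ℂ) (j : Fin n) : ‖v j‖ ≤ l1norm v :=
  Finset.single_le_sum (f := fun j => ‖v j‖) (fun _ _ => norm_nonneg _) (Finset.mem_univ j)

lemma norm_le_l1norm {n : ℕ} (v : Fin n → ℂ) : ‖v‖ ≤ l1norm v :=
  (pi_norm_le_iff_of_nonneg (l1norm_nonneg v)).2 (norm_apply_le_l1norm v)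

lemma l1norm_smul {n : ℕ} (a : ℂ) (v : Fin n → ℂ) : l1norm (a • v) = ‖a‖ * l1norm v := by
  simp only [l1norm, Pi.smul_apply, smul_eq_mul, norm_mul, Finset.mul_sum]

lemma l1norm_single {n : ℕ} (i : Fin n) : l1norm (Pi.single i (1 : ℂ)) = 1 := by
  simp [l1norm, Pi.single_apply, apply_ite (‖·‖)]

lemma l1norm_tsum_le {ι : Type*} {n : ℕ} {f : ι → Fin n → ℂ}
    (hf : Summable fun i => l1norm (f i)) : l1norm (∑' i, f i) ≤ ∑' i, l1norm (f i) := by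
  have hcoord : ∀ j, Summable fun i => ‖f i j‖ := fun j =>
    hf.of_nonneg_of_le (fun _ => norm_nonneg _) fun i => norm_apply_le_l1norm (f i) j
  have hsum : Summable f := Pi.summable.2 fun j => (hcoord j).of_norm
  calc l1norm (∑' i, f i) = ∑ j, ‖∑' i, f i j‖ := by simp only [l1norm, tsum_apply hsum]
    _ ≤ ∑ j, ∑' i, ‖f i j‖ := Finset.sum_le_sum fun j _ => norm_tsum_le_tsum_norm (hcoord j)
    _ = ∑' i, l1norm (f i) := (Summable.tsum_finsetSum fun j _ => hcoord j).symm

lemma Matrix.mulVec_tsum {ι m n : Type*} [Fintype m] [Fintype n] (A : Matrix m n ℂ)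
    {f : ι → n → ℂ} (hf : Summable f) : A *ᵥ ∑' i, f i = ∑' i, A *ᵥ f i :=
  (LinearMap.toContinuousLinearMap A.mulVecLin).map_tsum hf

lemma Summable.matrix_mulVec {ι m n : Type*} [Fintype m] [Fintype n] (A : Matrix m n ℂ)
    {f : ι → n → ℂ} (hf : Summable f) : Summable fun i => A *ᵥ f i :=
  hf.mapL (LinearMap.toContinuousLinearMap A.mulVecLin)

lemma tsum_norm_single {X : Type*} [DecidableEq X] (t : X) :
    ∑' s, ‖(Pi.single t 1 : X → ℂ) s‖ = 1 := by
  rw [tsum_eq_single t fun t' ht' => by simp [ht']]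
  simp

lemma summable_norm_single {X : Type*} [DecidableEq X] (t : X) :
    Summable fun s => ‖(Pi.single t 1 : X → ℂ) s‖ :=
  summable_of_ne_finset_zero (s := {t}) fun s hs => by simp_all

section

variable {X : Type*} {K : X → X → ℂ}

lemma kernelVec_self {n : ℕ} (x : Fin n → X) (i : Fin n) :
    kernelVec K x (x i) = kernelMatrix K x *ᵥ Pi.single i 1 := by
  ext j
  simp [kernelVec, kernelMatrix]

lemma PhiMap_single [DecidableEq X] (t s : X) : PhiMap K (Pi.single t 1) s = K t s := by
  rw [PhiMap, tsum_eq_single t fun t' ht' => by simp [ht']]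
  simp

lemma CondA4.l1norm_inv_mulVec_kernelVec_le_one (hA1 : CondA1 K) (hA4 : CondA4 K) {n : ℕ}
    {x : Fin n → X} (hx : Function.Injective x) (t : X) :
    l1norm ((kernelMatrix K x)⁻¹ *ᵥ kernelVec K x t) ≤ 1 := by
  classical
  by_cases ht : t ∈ Set.range x
  · obtain ⟨i, rfl⟩ := ht
    rw [kernelVec_self, mulVec_mulVec, nonsing_inv_mul _ (hA1 n x hx), one_mulVec, l1norm_single]
  · simpa using hA4 n (Fin.snoc x t) (Fin.snoc_injective_of_injective hx ht)

lemma CondA4.l1norm_inv_mulVec_le_tsum_norm (hA1 : CondA1 K) (hA4 : CondA4 K) {n : ℕ}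
    {x : Fin n → X} (hx : Function.Injective x) {c : X → ℂ} (hc : Summable fun t => ‖c t‖)
    {y : Fin n → ℂ} (hy : ∀ i, PhiMap K c (x i) = y i) :
    l1norm ((kernelMatrix K x)⁻¹ *ᵥ y) ≤ ∑' t, ‖c t‖ := by
  set A := kernelMatrix K x
  set g : X → Fin n → ℂ := fun t => A⁻¹ *ᵥ kernelVec K x t
  have hAg : ∀ t, A *ᵥ g t = kernelVec K x t := fun t => by
    rw [mulVec_mulVec, mul_nonsing_inv _ (hA1 n x hx), one_mulVec]
  have hcg : ∀ t, l1norm (c t • g t) ≤ ‖c t‖ := fun t => by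
    rw [l1norm_smul]
    exact mul_le_of_le_one_right (norm_nonneg _) (hA4.l1norm_inv_mulVec_kernelVec_le_one hA1 hx t)
  have hcg_l1 : Summable fun t => l1norm (c t • g t) :=
    hc.of_nonneg_of_le (fun t => l1norm_nonneg _) hcg
  have hcg_sum : Summable fun t => c t • g t :=
    hcg_l1.of_norm_bounded fun t => norm_le_l1norm _
  have hcK_sum : Summable fun t => c t • kernelVec K x t := by
    simpa only [mulVec_smul, hAg] using hcg_sum.matrix_mulVec A
  have hy_tsum : y = ∑' t, c t • kernelVec K x t := by
    ext i
    rw [tsum_apply hcK_sum, ← hy i]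
    rfl
  have hinv_y : A⁻¹ *ᵥ y = ∑' t, c t • g t := by
    rw [hy_tsum, Matrix.mulVec_tsum _ hcK_sum]
    simp only [mulVec_smul, g]
  calc l1norm (A⁻¹ *ᵥ y) ≤ ∑' t, l1norm (c t • g t) := hinv_y ▸ l1norm_tsum_le hcg_l1
    _ ≤ ∑' t, ‖c t‖ := hcg_l1.tsum_le_tsum hcg hc

end

theorem stmt_6_general {X : Type*} (K : X → X → ℂ) (hA1 : CondA1 K) :
    CondA4 K ↔
      ∀ (n : ℕ) (x : Fin n → X), Function.Injective x → ∀ y : Fin n → ℂ,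
        ∀ c : X → ℂ, Summable (fun t => ‖c t‖) →
          (∀ i, PhiMap K c (x i) = y i) →
          l1norm ((kernelMatrix K x)⁻¹ *ᵥ y) ≤ ∑' t, ‖c t‖ := by
  classical
  refine ⟨fun hA4 n x hx y c hc hy => hA4.l1norm_inv_mulVec_le_tsum_norm hA1 hx hc hy,
    fun h n x hx => ?_⟩
  have := h n (fun i => x i.castSucc) (hx.comp (Fin.castSucc_injective n)) _
    (Pi.single (x (Fin.last n)) 1) (summable_norm_single _) fun i => PhiMap_single _ _
  rwa [tsum_norm_single] at this

theorem stmt_6 {X : Type*} (K : X → X → ℂ) (M : ℝ)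
    (hK : ∀ s t, ‖K s t‖ ≤ M) (hA1 : CondA1 K) :
    CondA4 K ↔
      ∀ (n : ℕ) (x : Fin n → X), Function.Injective x → ∀ y : Fin n → ℂ,
        ∀ c : X → ℂ, Summable (fun t => ‖c t‖) →
          (∀ i, PhiMap K c (x i) = y i) →
          l1norm ((kernelMatrix K x)⁻¹ *ᵥ y) ≤ ∑' t, ‖c t‖ :=
  stmt_6_general K hA1
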